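/- arXiv:2305.16828 — 3 statements merged into one kernel-verified Lean document; each statement's English description precedes it below -/
import Mathlib

section
/- (Fine's classical patching theorem.) Given a factorizable model μ^{ab}, μ^{ab'}, μ^{a'b}, μ^{a'b'} for the CHSH scenario, there exists a joint probability measure ν : Bool → Bool → Bool → Bool → K → ℝ, nonnegative with total sum 1, having the four factorizable measures as marginals: for all i, i', j, j' ∈ Bool and k ∈ K, ∑_{i',j'} ν(i,i',j,j',k) = μ^{ab}(i,j,k), ∑_{i',j} ν(i,i',j,j',k) = μ^{ab'}(i,j',k), ∑_{i,j'} ν(i,i',j,j',k) = μ^{a'b}(i',j,k), and ∑_{i,j} ν(i,i',j,j',k) = μ^{a'b'}(i',j',k). Consequently, summing ν further over k ∈ K yields a joint probability distribution on the beam-events alone that has the four experimental probability distributions ∑_k μ^{αβ} as marginals. -/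
/-!
Conditionally on the hidden history `k`, let the four wings be independent, each distributed
according to its conditional single-wing marginal, and weight by `μ(k)`:
`ν(i,i',j,j',k) = μ^a(i,k) μ^{a'}(i',k) μ^b(j,k) μ^{b'}(j',k) / μ(k)³`.
Summing out two wings leaves `μ^α(·,k) μ^β(·,k) / μ(k)`, which is `μ^{αβ}(·,·,k)` by
factorizability. When `μ(k) = 0` both sides vanish: the left because `x / 0 = 0`, the right
by nonnegativity.
-/

open Finset

section Patching

variable {α α' β β' : Type*}

lemma eq_marginals_mul_div_total [Fintype α] [Fintype β] {p : α → β → ℝ}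
    (hp : ∀ x y, 0 ≤ p x y)
    (hfac : ∀ x y, p x y * ∑ x₀, ∑ y₀, p x₀ y₀ = (∑ y₀, p x y₀) * ∑ x₀, p x₀ y)
    (x : α) (y : β) :
    p x y = (∑ y₀, p x y₀) * (∑ x₀, p x₀ y) / ∑ x₀, ∑ y₀, p x₀ y₀ := by
  rcases (sum_nonneg fun x _ => sum_nonneg fun y _ => hp x y).eq_or_lt with hZ | hZ
  · rw [← hZ, div_zero]
    refine le_antisymm ?_ (hp x y)
    calc p x y ≤ ∑ y₀, p x y₀ := single_le_sum (fun y _ => hp x y) (mem_univ y)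
      _ ≤ ∑ x₀, ∑ y₀, p x₀ y₀ :=
        single_le_sum (f := fun x => ∑ y₀, p x y₀) (fun x _ => sum_nonneg fun y _ => hp x y)
          (mem_univ x)
      _ = 0 := hZ.symm
  · rw [eq_div_iff hZ.ne', hfac]

lemma sum_sum_mul_mul_div_pow_three [Fintype α] [Fintype β] {u : α → ℝ} {v : β → ℝ} {Z : ℝ}
    (hu : ∑ x, u x = Z) (hv : ∑ y, v y = Z) (c : ℝ) :
    ∑ x, ∑ y, c * u x * v y / Z ^ 3 = c / Z := by
  have : ∑ x, ∑ y, c * u x * v y / Z ^ 3 = c * (∑ x, u x) * (∑ y, v y) / Z ^ 3 := by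
    rw [mul_sum univ u c, sum_mul_sum, sum_div]
    simp only [sum_div]
  rw [this, hu, hv]
  rcases eq_or_ne Z 0 with rfl | hZ
  · simp
  · field_simp

noncomputable def patch (Z : ℝ) (pa : α → ℝ) (pa' : α' → ℝ) (pb : β → ℝ) (pb' : β' → ℝ)
    (x : α) (x' : α') (y : β) (y' : β') : ℝ :=
  pa x * pa' x' * pb y * pb' y' / Z ^ 3

variable {Z : ℝ} {pa : α → ℝ} {pa' : α' → ℝ} {pb : β → ℝ} {pb' : β' → ℝ}

lemma patch_nonneg (hZ : 0 ≤ Z) (ha : ∀ x, 0 ≤ pa x) (ha' : ∀ x', 0 ≤ pa' x')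
    (hb : ∀ y, 0 ≤ pb y) (hb' : ∀ y', 0 ≤ pb' y') (x : α) (x' : α') (y : β) (y' : β') :
    0 ≤ patch Z pa pa' pb pb' x x' y y' := by
  unfold patch
  have := ha x; have := ha' x'; have := hb y; have := hb' y'
  positivity

lemma sum_sum_patch_ab [Fintype α'] [Fintype β']
    (ha' : ∑ x', pa' x' = Z) (hb' : ∑ y', pb' y' = Z) (x : α) (y : β) :
    ∑ x', ∑ y', patch Z pa pa' pb pb' x x' y y' = pa x * pb y / Z := by
  unfold patch
  convert sum_sum_mul_mul_div_pow_three ha' hb' (pa x * pb y) using 4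
  ring

lemma sum_sum_patch_ab' [Fintype α'] [Fintype β]
    (ha' : ∑ x', pa' x' = Z) (hb : ∑ y, pb y = Z) (x : α) (y' : β') :
    ∑ x', ∑ y, patch Z pa pa' pb pb' x x' y y' = pa x * pb' y' / Z := by
  unfold patch
  convert sum_sum_mul_mul_div_pow_three ha' hb (pa x * pb' y') using 4
  ring

lemma sum_sum_patch_a'b [Fintype α] [Fintype β']
    (ha : ∑ x, pa x = Z) (hb' : ∑ y', pb' y' = Z) (x' : α') (y : β) :
    ∑ x, ∑ y', patch Z pa pa' pb pb' x x' y y' = pa' x' * pb y / Z := by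
  unfold patch
  convert sum_sum_mul_mul_div_pow_three ha hb' (pa' x' * pb y) using 4
  ring

lemma sum_sum_patch_a'b' [Fintype α] [Fintype β]
    (ha : ∑ x, pa x = Z) (hb : ∑ y, pb y = Z) (x' : α') (y' : β') :
    ∑ x, ∑ y, patch Z pa pa' pb pb' x x' y y' = pa' x' * pb' y' / Z := by
  unfold patch
  convert sum_sum_mul_mul_div_pow_three ha hb (pa' x' * pb' y') using 4
  ring

end Patching

lemma sum_sum_sum_eq_of_sum_sum_eq {α β γ M : Type*} [Fintype α] [Fintype β] [Fintype γ]
    [AddCommMonoid M] {f : α → β → γ → M} {g : γ → M} (h : ∀ z, ∑ x, ∑ y, f x y z = g z) :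
    ∑ x, ∑ y, ∑ z, f x y z = ∑ z, g z :=
  ((sum_congr rfl fun _ _ => sum_comm).trans sum_comm).trans (sum_congr rfl fun z _ => h z)

theorem fine_classical_patching_general
    {K : Type*} [Fintype K]
    (μab μab' μa'b μa'b' : Bool → Bool → K → ℝ)
    -- nonnegativity
    (hab_nonneg : ∀ i j k, 0 ≤ μab i j k)
    (hab'_nonneg : ∀ i j' k, 0 ≤ μab' i j' k)
    (ha'b_nonneg : ∀ i' j k, 0 ≤ μa'b i' j k)
    (ha'b'_nonneg : ∀ i' j' k, 0 ≤ μa'b' i' j' k)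
    -- normalisation
    (hab_norm : ∑ i, ∑ j, ∑ k, μab i j k = 1)
    -- agreement: common K-marginal μ(k)
    (hZ1 : ∀ k, ∑ i, ∑ j, μab i j k = ∑ i, ∑ j', μab' i j' k)
    (hZ2 : ∀ k, ∑ i, ∑ j, μab i j k = ∑ i', ∑ j, μa'b i' j k)
    (hZ3 : ∀ k, ∑ i, ∑ j, μab i j k = ∑ i', ∑ j', μa'b' i' j' k)
    -- agreement: single-wing marginals
    (ha : ∀ i k, ∑ j, μab i j k = ∑ j', μab' i j' k)
    (ha' : ∀ i' k, ∑ j, μa'b i' j k = ∑ j', μa'b' i' j' k)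
    (hb : ∀ j k, ∑ i, μab i j k = ∑ i', μa'b i' j k)
    (hb' : ∀ j' k, ∑ i, μab' i j' k = ∑ i', μa'b' i' j' k)
    -- factorizability conditional on the hidden history k
    (hfac_ab : ∀ i j k,
      μab i j k * (∑ i₀, ∑ j₀, μab i₀ j₀ k)
        = (∑ j₀, μab i j₀ k) * (∑ i₀, μab i₀ j k))
    (hfac_ab' : ∀ i j' k,
      μab' i j' k * (∑ i₀, ∑ j₀, μab' i₀ j₀ k)
        = (∑ j₀, μab' i j₀ k) * (∑ i₀, μab' i₀ j' k))
    (hfac_a'b : ∀ i' j k,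
      μa'b i' j k * (∑ i₀, ∑ j₀, μa'b i₀ j₀ k)
        = (∑ j₀, μa'b i' j₀ k) * (∑ i₀, μa'b i₀ j k))
    (hfac_a'b' : ∀ i' j' k,
      μa'b' i' j' k * (∑ i₀, ∑ j₀, μa'b' i₀ j₀ k)
        = (∑ j₀, μa'b' i' j₀ k) * (∑ i₀, μa'b' i₀ j' k)) :
    ∃ ν : Bool → Bool → Bool → Bool → K → ℝ,
      (∀ i i' j j' k, 0 ≤ ν i i' j j' k) ∧
      (∑ i, ∑ i', ∑ j, ∑ j', ∑ k, ν i i' j j' k = 1) ∧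
      -- the four factorizable measures are marginals of ν
      (∀ i j k, ∑ i', ∑ j', ν i i' j j' k = μab i j k) ∧
      (∀ i j' k, ∑ i', ∑ j, ν i i' j j' k = μab' i j' k) ∧
      (∀ i' j k, ∑ i, ∑ j', ν i i' j j' k = μa'b i' j k) ∧
      (∀ i' j' k, ∑ i, ∑ j, ν i i' j j' k = μa'b' i' j' k) ∧
      -- hence the experimental distributions are marginals of ∑_k ν
      (∀ i j, ∑ i', ∑ j', ∑ k, ν i i' j j' k = ∑ k, μab i j k) ∧
      (∀ i j', ∑ i', ∑ j, ∑ k, ν i i' j j' k = ∑ k, μab' i j' k) ∧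
      (∀ i' j, ∑ i, ∑ j', ∑ k, ν i i' j j' k = ∑ k, μa'b i' j k) ∧
      (∀ i' j', ∑ i, ∑ j, ∑ k, ν i i' j j' k = ∑ k, μa'b' i' j' k) := by
  obtain ⟨ν, hν⟩ : ∃ ν : Bool → Bool → Bool → Bool → K → ℝ, ∀ i i' j j' k,
      ν i i' j j' k = patch (∑ i, ∑ j, μab i j k) (fun i => ∑ j, μab i j k)
        (fun i' => ∑ j, μa'b i' j k) (fun j => ∑ i, μab i j k) (fun j' => ∑ i, μab' i j' k)
        i i' j j' := ⟨_, fun _ _ _ _ _ => rfl⟩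
  have hsum_a' k : ∑ i', ∑ j, μa'b i' j k = ∑ i, ∑ j, μab i j k := (hZ2 k).symm
  have hsum_b k : ∑ j, ∑ i, μab i j k = ∑ i, ∑ j, μab i j k := sum_comm
  have hsum_b' k : ∑ j', ∑ i, μab' i j' k = ∑ i, ∑ j, μab i j k := sum_comm.trans (hZ1 k).symm
  have hab i j k : ∑ i', ∑ j', ν i i' j j' k = μab i j k := by
    simp only [hν]
    rw [sum_sum_patch_ab (hsum_a' k) (hsum_b' k)]
    exact (eq_marginals_mul_div_total (hab_nonneg · · k) (hfac_ab · · k) i j).symm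
  have hab' i j' k : ∑ i', ∑ j, ν i i' j j' k = μab' i j' k := by
    simp only [hν]
    rw [sum_sum_patch_ab' (hsum_a' k) (hsum_b k), ha i k, hZ1 k]
    exact (eq_marginals_mul_div_total (hab'_nonneg · · k) (hfac_ab' · · k) i j').symm
  have ha'b i' j k : ∑ i, ∑ j', ν i i' j j' k = μa'b i' j k := by
    simp only [hν]
    rw [sum_sum_patch_a'b rfl (hsum_b' k), hb j k, hZ2 k]
    exact (eq_marginals_mul_div_total (ha'b_nonneg · · k) (hfac_a'b · · k) i' j).symm
  have ha'b' i' j' k : ∑ i, ∑ j, ν i i' j j' k = μa'b' i' j' k := by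
    simp only [hν]
    rw [sum_sum_patch_a'b' rfl (hsum_b k), ha' i' k, hb' j' k, hZ3 k]
    exact (eq_marginals_mul_div_total (ha'b'_nonneg · · k) (hfac_a'b' · · k) i' j').symm
  have hν_nonneg i i' j j' k : 0 ≤ ν i i' j j' k := by
    rw [hν]
    exact patch_nonneg (sum_nonneg fun _ _ => sum_nonneg fun _ _ => hab_nonneg _ _ k)
      (fun _ => sum_nonneg fun _ _ => hab_nonneg _ _ k)
      (fun _ => sum_nonneg fun _ _ => ha'b_nonneg _ _ k)
      (fun _ => sum_nonneg fun _ _ => hab_nonneg _ _ k)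
      (fun _ => sum_nonneg fun _ _ => hab'_nonneg _ _ k) _ _ _ _
  have hab_total i j : ∑ i', ∑ j', ∑ k, ν i i' j j' k = ∑ k, μab i j k :=
    sum_sum_sum_eq_of_sum_sum_eq (hab i j)
  refine ⟨ν, hν_nonneg, ?_, hab, hab', ha'b, ha'b', hab_total,
    fun i j' => sum_sum_sum_eq_of_sum_sum_eq (hab' i j'),
    fun i' j => sum_sum_sum_eq_of_sum_sum_eq (ha'b i' j),
    fun i' j' => sum_sum_sum_eq_of_sum_sum_eq (ha'b' i' j')⟩
  calc ∑ i, ∑ i', ∑ j, ∑ j', ∑ k, ν i i' j j' k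
      = ∑ i, ∑ j, ∑ i', ∑ j', ∑ k, ν i i' j j' k := sum_congr rfl fun _ _ => sum_comm
    _ = 1 := by simp only [hab_total, hab_norm]

/-- Fine's classical patching theorem: Given a factorizable model
`μab, μab', μa'b, μa'b'` for the CHSH scenario (four nonnegative normalised measures on
beam-events × hidden histories `K`, agreeing on common marginals and each factorizing
conditionally on the hidden history), there is a joint probability measure
`ν : Bool → Bool → Bool → Bool → K → ℝ` having the four measures as marginals, and hence
(summing over `K`) a joint distribution on the beam-events alone having the four
experimental distributions as marginals. -/
theorem fine_classical_patching
    {K : Type*} [Fintype K]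
    (μab μab' μa'b μa'b' : Bool → Bool → K → ℝ)
    -- nonnegativity
    (hab_nonneg : ∀ i j k, 0 ≤ μab i j k)
    (hab'_nonneg : ∀ i j' k, 0 ≤ μab' i j' k)
    (ha'b_nonneg : ∀ i' j k, 0 ≤ μa'b i' j k)
    (ha'b'_nonneg : ∀ i' j' k, 0 ≤ μa'b' i' j' k)
    -- normalisation
    (hab_norm : ∑ i, ∑ j, ∑ k, μab i j k = 1)
    (hab'_norm : ∑ i, ∑ j', ∑ k, μab' i j' k = 1)
    (ha'b_norm : ∑ i', ∑ j, ∑ k, μa'b i' j k = 1)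
    (ha'b'_norm : ∑ i', ∑ j', ∑ k, μa'b' i' j' k = 1)
    -- agreement: common K-marginal μ(k)
    (hZ1 : ∀ k, ∑ i, ∑ j, μab i j k = ∑ i, ∑ j', μab' i j' k)
    (hZ2 : ∀ k, ∑ i, ∑ j, μab i j k = ∑ i', ∑ j, μa'b i' j k)
    (hZ3 : ∀ k, ∑ i, ∑ j, μab i j k = ∑ i', ∑ j', μa'b' i' j' k)
    -- agreement: single-wing marginals
    (ha : ∀ i k, ∑ j, μab i j k = ∑ j', μab' i j' k)
    (ha' : ∀ i' k, ∑ j, μa'b i' j k = ∑ j', μa'b' i' j' k)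
    (hb : ∀ j k, ∑ i, μab i j k = ∑ i', μa'b i' j k)
    (hb' : ∀ j' k, ∑ i, μab' i j' k = ∑ i', μa'b' i' j' k)
    -- factorizability conditional on the hidden history k
    (hfac_ab : ∀ i j k,
      μab i j k * (∑ i₀, ∑ j₀, μab i₀ j₀ k)
        = (∑ j₀, μab i j₀ k) * (∑ i₀, μab i₀ j k))
    (hfac_ab' : ∀ i j' k,
      μab' i j' k * (∑ i₀, ∑ j₀, μab' i₀ j₀ k)
        = (∑ j₀, μab' i j₀ k) * (∑ i₀, μab' i₀ j' k))
    (hfac_a'b : ∀ i' j k,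
      μa'b i' j k * (∑ i₀, ∑ j₀, μa'b i₀ j₀ k)
        = (∑ j₀, μa'b i' j₀ k) * (∑ i₀, μa'b i₀ j k))
    (hfac_a'b' : ∀ i' j' k,
      μa'b' i' j' k * (∑ i₀, ∑ j₀, μa'b' i₀ j₀ k)
        = (∑ j₀, μa'b' i' j₀ k) * (∑ i₀, μa'b' i₀ j' k)) :
    ∃ ν : Bool → Bool → Bool → Bool → K → ℝ,
      (∀ i i' j j' k, 0 ≤ ν i i' j j' k) ∧
      (∑ i, ∑ i', ∑ j, ∑ j', ∑ k, ν i i' j j' k = 1) ∧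
      -- the four factorizable measures are marginals of ν
      (∀ i j k, ∑ i', ∑ j', ν i i' j j' k = μab i j k) ∧
      (∀ i j' k, ∑ i', ∑ j, ν i i' j j' k = μab' i j' k) ∧
      (∀ i' j k, ∑ i, ∑ j', ν i i' j j' k = μa'b i' j k) ∧
      (∀ i' j' k, ∑ i, ∑ j, ν i i' j j' k = μa'b' i' j' k) ∧
      -- hence the experimental distributions are marginals of ∑_k ν
      (∀ i j, ∑ i', ∑ j', ∑ k, ν i i' j j' k = ∑ k, μab i j k) ∧
      (∀ i j', ∑ i', ∑ j, ∑ k, ν i i' j j' k = ∑ k, μab' i j' k) ∧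
      (∀ i' j, ∑ i, ∑ j', ∑ k, ν i i' j j' k = ∑ k, μa'b i' j k) ∧
      (∀ i' j', ∑ i, ∑ j, ∑ k, ν i i' j j' k = ∑ k, μa'b' i' j' k) :=
  fine_classical_patching_general μab μab' μa'b μa'b' hab_nonneg hab'_nonneg ha'b_nonneg
    ha'b'_nonneg hab_norm hZ1 hZ2 hZ3 ha ha' hb hb' hfac_ab hfac_ab' hfac_a'b hfac_a'b'
end

section
/- (Quantum patching theorem, operator form.) Let H be a complex inner product space, K a finite type, and w : K → H. Let A_u, A_d, A'_u, A'_d, B_u, B_d, B'_u, B'_d be linear endomorphisms of H with A_u + A_d = 1, A'_u + A'_d = 1, B_u + B_d = 1, B'_u + B'_d = 1, and such that each of A_u, A_d, A'_u, A'_d commutes with each of B_u, B_d, B'_u, B'_d. Define D^{patch}((i,i',j,j',k),(ī,ī',j̄,j̄',k̄)) := ⟪A_i A'_{i'} B_j B'_{j'} w_k, A_ī A'_{ī'} B_j̄ B'_{j̄'} w_k̄⟫ for i,i',j,j',ī,ī',j̄,j̄' ∈ {u,d} and k, k̄ ∈ K. Then: (1) D^{patch} is Hermitian: D^{patch}(x,y)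 = conj(D^{patch}(y,x)); (2) for every finite family x_1,…,x_m of arguments, the matrix (D^{patch}(x_p,x_q)) is positive semidefinite; (3) D^{patch} has the four setting-wise decoherence functionals as marginals: ∑_{i',ī',j',j̄'} D^{patch}((i,i',j,j',k),(ī,ī',j̄,j̄',k̄)) = ⟪A_i B_j w_k, A_ī B_j̄ w_k̄⟫; ∑_{i',ī',j,j̄} D^{patch} = ⟪A_i B'_{j'} w_k, A_ī B'_{j̄'} w_k̄⟫; ∑_{i,ī,j',j̄'} D^{patch} = ⟪A'_{i'} B_j w_k, A'_{ī'} B_j̄ w_k̄⟫; ∑_{i,ī,j,j̄} D^{patch} = ⟪A'_{i'} B'_{j'} w_k, A'_{ī'} B'_{j̄'} w_k̄⟫. -/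
/-!
The patched functional is the Gram kernel of the vectors `A_i A'_{i'} B_j B'_{j'} w_k`, which
makes it Hermitian and positive semidefinite. Summing a pair of indices of one setting pulls the
sums through the outer operators, where the resolution of the identity `X_u + X_d = 1` removes
that operator; two such steps leave the setting-wise functional.
-/

open scoped ComplexOrder

/-- The patched decoherence functional
`D^{patch}((i,i',j,j',k),(ī,ī',j̄,j̄',k̄)) := ⟪A_i A'_{i'} B_j B'_{j'} w_k, … w_k̄⟫`. -/
noncomputable def Dpatch {H K : Type*} [NormedAddCommGroup H] [InnerProductSpace ℂ H]
    (A A' B B' : Bool → (H →ₗ[ℂ] H)) (w : K → H)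
    (x y : Bool × Bool × Bool × Bool × K) : ℂ :=
  inner ℂ (A x.1 (A' x.2.1 (B x.2.2.1 (B' x.2.2.2.1 (w x.2.2.2.2)))))
        (A y.1 (A' y.2.1 (B y.2.2.1 (B' y.2.2.2.1 (w y.2.2.2.2)))))

open scoped InnerProductSpace

theorem LinearMap.sum_bool_apply_eq_self {R M : Type*} [Semiring R] [AddCommMonoid M]
    [Module R M] {T : Bool → M →ₗ[R] M} (hT : T true + T false = LinearMap.id) (v : M) :
    ∑ b, T b v = v := by
  simpa using LinearMap.congr_fun hT v

theorem sum_sum_sum_sum_inner {𝕜 E α β : Type*} [RCLike 𝕜] [SeminormedAddCommGroup E]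
    [InnerProductSpace 𝕜 E] (s : Finset α) (t : Finset β) (f g : α → β → E) :
    ∑ a ∈ s, ∑ a' ∈ s, ∑ b ∈ t, ∑ b' ∈ t, ⟪f a b, g a' b'⟫_𝕜
      = ⟪∑ a ∈ s, ∑ b ∈ t, f a b, ∑ a' ∈ s, ∑ b' ∈ t, g a' b'⟫_𝕜 := by
  simp_rw [sum_inner, inner_sum]
  exact Finset.sum_congr rfl fun _ _ => Finset.sum_comm

section Patch

variable {H K : Type*} [NormedAddCommGroup H] [InnerProductSpace ℂ H]

def patchVector (A A' B B' : Bool → (H →ₗ[ℂ] H)) (w : K → H)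
    (x : Bool × Bool × Bool × Bool × K) : H :=
  A x.1 (A' x.2.1 (B x.2.2.1 (B' x.2.2.2.1 (w x.2.2.2.2))))

variable (A A' B B' : Bool → (H →ₗ[ℂ] H)) (w : K → H)

theorem Dpatch_conj_symm (x y : Bool × Bool × Bool × Bool × K) :
    Dpatch A A' B B' w x y = starRingEnd ℂ (Dpatch A A' B B' w y x) :=
  (inner_conj_symm _ _).symm

theorem Dpatch_posSemidef {ι : Type*} [Finite ι] (x : ι → Bool × Bool × Bool × Bool × K) :
    (Matrix.of fun p q : ι => Dpatch A A' B B' w (x p) (x q)).PosSemidef :=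
  Matrix.posSemidef_gram ℂ (patchVector A A' B B' w ∘ x)

end Patch

theorem quantum_patching_general
    {H K : Type*} [NormedAddCommGroup H] [InnerProductSpace ℂ H]
    (A A' B B' : Bool → (H →ₗ[ℂ] H)) (w : K → H)
    (hA : A true + A false = LinearMap.id)
    (hA' : A' true + A' false = LinearMap.id)
    (hB : B true + B false = LinearMap.id)
    (hB' : B' true + B' false = LinearMap.id) :
    -- (1) Hermiticity
    (∀ x y : Bool × Bool × Bool × Bool × K,
      Dpatch A A' B B' w x y = starRingEnd ℂ (Dpatch A A' B B' w y x)) ∧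
    -- (2) strong positivity
    (∀ (m : ℕ) (x : Fin m → Bool × Bool × Bool × Bool × K),
      (Matrix.of fun p q : Fin m =>
        Dpatch A A' B B' w (x p) (x q)).PosSemidef) ∧
    -- (3) the four setting-wise decoherence functionals are marginals
    (∀ i ibar j jbar (k kbar : K),
      ∑ i', ∑ ibar', ∑ j', ∑ jbar',
          Dpatch A A' B B' w (i, i', j, j', k) (ibar, ibar', jbar, jbar', kbar)
        = inner ℂ (A i (B j (w k))) (A ibar (B jbar (w kbar)))) ∧
    (∀ i ibar j' jbar' (k kbar : K),
      ∑ i', ∑ ibar', ∑ j, ∑ jbar,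
          Dpatch A A' B B' w (i, i', j, j', k) (ibar, ibar', jbar, jbar', kbar)
        = inner ℂ (A i (B' j' (w k))) (A ibar (B' jbar' (w kbar)))) ∧
    (∀ i' ibar' j jbar (k kbar : K),
      ∑ i, ∑ ibar, ∑ j', ∑ jbar',
          Dpatch A A' B B' w (i, i', j, j', k) (ibar, ibar', jbar, jbar', kbar)
        = inner ℂ (A' i' (B j (w k))) (A' ibar' (B jbar (w kbar)))) ∧
    (∀ i' ibar' j' jbar' (k kbar : K),
      ∑ i, ∑ ibar, ∑ j, ∑ jbar,
          Dpatch A A' B B' w (i, i', j, j', k) (ibar, ibar', jbar, jbar', kbar)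
        = inner ℂ (A' i' (B' j' (w k))) (A' ibar' (B' jbar' (w kbar)))) := by
  have sumA := LinearMap.sum_bool_apply_eq_self hA
  have sumA' := LinearMap.sum_bool_apply_eq_self hA'
  have sumB := LinearMap.sum_bool_apply_eq_self hB
  have sumB' := LinearMap.sum_bool_apply_eq_self hB'
  refine ⟨Dpatch_conj_symm A A' B B' w, fun _ => Dpatch_posSemidef A A' B B' w, ?_, ?_, ?_, ?_⟩ <;>
  · intro _ _ _ _ _ _
    simp only [Dpatch, sum_sum_sum_sum_inner, ← map_sum, sumA, sumA', sumB, sumB']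

/-- Quantum patching theorem, operator form: given resolutions of the
identity `A, A', B, B'` with the `A`-type operators commuting with the `B`-type ones, the
patched decoherence functional `D^{patch}` is Hermitian, strongly positive, and has the
four setting-wise decoherence functionals as marginals. -/
theorem quantum_patching
    {H K : Type*} [NormedAddCommGroup H] [InnerProductSpace ℂ H] [Fintype K]
    (A A' B B' : Bool → (H →ₗ[ℂ] H)) (w : K → H)
    (hA : A true + A false = LinearMap.id)
    (hA' : A' true + A' false = LinearMap.id)
    (hB : B true + B false = LinearMap.id)
    (hB' : B' true + B' false = LinearMap.id)
    (hAB : ∀ i j (x : H), A i (B j x) = B j (A i x))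
    (hAB' : ∀ i j' (x : H), A i (B' j' x) = B' j' (A i x))
    (hA'B : ∀ i' j (x : H), A' i' (B j x) = B j (A' i' x))
    (hA'B' : ∀ i' j' (x : H), A' i' (B' j' x) = B' j' (A' i' x)) :
    -- (1) Hermiticity
    (∀ x y : Bool × Bool × Bool × Bool × K,
      Dpatch A A' B B' w x y = starRingEnd ℂ (Dpatch A A' B B' w y x)) ∧
    -- (2) strong positivity
    (∀ (m : ℕ) (x : Fin m → Bool × Bool × Bool × Bool × K),
      (Matrix.of fun p q : Fin m =>
        Dpatch A A' B B' w (x p) (x q)).PosSemidef) ∧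
    -- (3) the four setting-wise decoherence functionals are marginals
    (∀ i ibar j jbar (k kbar : K),
      ∑ i', ∑ ibar', ∑ j', ∑ jbar',
          Dpatch A A' B B' w (i, i', j, j', k) (ibar, ibar', jbar, jbar', kbar)
        = inner ℂ (A i (B j (w k))) (A ibar (B jbar (w kbar)))) ∧
    (∀ i ibar j' jbar' (k kbar : K),
      ∑ i', ∑ ibar', ∑ j, ∑ jbar,
          Dpatch A A' B B' w (i, i', j, j', k) (ibar, ibar', jbar, jbar', kbar)
        = inner ℂ (A i (B' j' (w k))) (A ibar (B' jbar' (w kbar)))) ∧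
    (∀ i' ibar' j jbar (k kbar : K),
      ∑ i, ∑ ibar, ∑ j', ∑ jbar',
          Dpatch A A' B B' w (i, i', j, j', k) (ibar, ibar', jbar, jbar', kbar)
        = inner ℂ (A' i' (B j (w k))) (A' ibar' (B jbar (w kbar)))) ∧
    (∀ i' ibar' j' jbar' (k kbar : K),
      ∑ i, ∑ ibar, ∑ j, ∑ jbar,
          Dpatch A A' B B' w (i, i', j, j', k) (ibar, ibar', jbar, jbar', kbar)
        = inner ℂ (A' i' (B' j' (w k))) (A' ibar' (B' jbar' (w kbar)))) :=
  quantum_patching_general A A' B B' w hA hA' hB hB'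
end

section
/- (Converse patching theorem: existence of a joint decoherence functional yields a factorizable PoZ-type model.) Let D_joint : K → K → ℂ with K := Bool × Bool × Bool × Bool, and define D^{abZ} and its marginals D^Z, D^{aZ}, D^{bZ} from D_joint as in the context. Then: (1) ∑_{k,k̄ ∈ K} D^{abZ}((i,j,k),(ī,j̄,k̄)) = ∑_{I',J',Ī',J̄'} D_joint((i,I',j,J'),(ī,Ī',j̄,J̄')), i.e. the (k,k̄)-marginal of D^{abZ} is the ab-marginal of D_joint (and the analogous identities hold for the three other global settings ab', a'b, a'b' with the analogously constructed D^{ab'Z}, D^{a'bZ}, D^{a'b'Z}); (2) D^Z(k,k̄) = D_joint(k,k̄) for all k, k̄ ∈ K; (3) the model is quantum factorizable: for all i, j, ī, j̄ ∈ Bool and k, k̄ ∈ K, D^{abZ}((i,j,k),(ī,j̄,k̄)) · D^Z(k,k̄) = D^{aZ}((i,k),(ī,k̄)) · D^{bZ}((j,k),(j̄,k̄)), and the analogous factorizability identities hold for the settings ab', a'b, a'b'. -/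
/-- The 16 hidden history-events in the past region `Z`, labelled by `(I, I', J, J')`. -/
abbrev KZ : Type := Bool × Bool × Bool × Bool

/-- The indicator `[b = c]` as a complex number. -/
def ind (b c : Bool) : ℂ := if b = c then 1 else 0

/-- The model decoherence functional for the global setting `ab`:
`D^{abZ}((i,j,k),(ī,j̄,k̄)) := [i=I]·[ī=Ī]·[j=J]·[j̄=J̄] · D_joint(k,k̄)`. -/
def DabZ (Dj : KZ → KZ → ℂ) : (Bool × Bool × KZ) → (Bool × Bool × KZ) → ℂ
  | (i, j, (I, I', J, J')), (ibar, jbar, (Ibar, Ibar', Jbar, Jbar')) =>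
    ind i I * ind ibar Ibar * ind j J * ind jbar Jbar
      * Dj (I, I', J, J') (Ibar, Ibar', Jbar, Jbar')

/-- The model decoherence functional for the global setting `ab'`. -/
def Dab'Z (Dj : KZ → KZ → ℂ) : (Bool × Bool × KZ) → (Bool × Bool × KZ) → ℂ
  | (i, j', (I, I', J, J')), (ibar, jbar', (Ibar, Ibar', Jbar, Jbar')) =>
    ind i I * ind ibar Ibar * ind j' J' * ind jbar' Jbar'
      * Dj (I, I', J, J') (Ibar, Ibar', Jbar, Jbar')

/-- The model decoherence functional for the global setting `a'b`. -/
def Da'bZ (Dj : KZ → KZ → ℂ) : (Bool × Bool × KZ) → (Bool × Bool × KZ) → ℂ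
  | (i', j, (I, I', J, J')), (ibar', jbar, (Ibar, Ibar', Jbar, Jbar')) =>
    ind i' I' * ind ibar' Ibar' * ind j J * ind jbar Jbar
      * Dj (I, I', J, J') (Ibar, Ibar', Jbar, Jbar')

/-- The model decoherence functional for the global setting `a'b'`. -/
def Da'b'Z (Dj : KZ → KZ → ℂ) : (Bool × Bool × KZ) → (Bool × Bool × KZ) → ℂ
  | (i', j', (I, I', J, J')), (ibar', jbar', (Ibar, Ibar', Jbar, Jbar')) =>
    ind i' I' * ind ibar' Ibar' * ind j' J' * ind jbar' Jbar'
      * Dj (I, I', J, J') (Ibar, Ibar', Jbar, Jbar')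

/-- The `Z`-marginal `D^Z` of `D^{abZ}`. -/
noncomputable def DZ (Dj : KZ → KZ → ℂ) (k kbar : KZ) : ℂ :=
  ∑ i, ∑ ibar, ∑ j, ∑ jbar, DabZ Dj (i, j, k) (ibar, jbar, kbar)

/-- The `a`-wing marginal `D^{aZ}` of `D^{abZ}`. -/
noncomputable def DaZ (Dj : KZ → KZ → ℂ) (x y : Bool × KZ) : ℂ :=
  ∑ j, ∑ jbar, DabZ Dj (x.1, j, x.2) (y.1, jbar, y.2)

/-- The `b`-wing marginal `D^{bZ}` of `D^{abZ}`. -/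
noncomputable def DbZ (Dj : KZ → KZ → ℂ) (x y : Bool × KZ) : ℂ :=
  ∑ i, ∑ ibar, DabZ Dj (i, x.1, x.2) (ibar, y.1, y.2)

set_option maxHeartbeats 4000000 in
/-- Converse patching theorem: from any joint decoherence functional
`D_joint` on all the beam-events one constructs the four model decoherence functionals
`D^{abZ}, D^{ab'Z}, D^{a'bZ}, D^{a'b'Z}`.  Then (1) the `(k,k̄)`-marginal of each model
is the corresponding marginal of `D_joint`; (2) `D^Z = D_joint`; and (3) each model is
quantum factorizable. -/
theorem converse_patching (Dj : KZ → KZ → ℂ) :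
    -- (1) the (k,k̄)-marginals of the four models are the marginals of D_joint
    (∀ i j ibar jbar : Bool,
      ∑ k : KZ, ∑ kbar : KZ, DabZ Dj (i, j, k) (ibar, jbar, kbar)
        = ∑ I' : Bool, ∑ J' : Bool, ∑ Ibar' : Bool, ∑ Jbar' : Bool,
            Dj (i, I', j, J') (ibar, Ibar', jbar, Jbar')) ∧
    (∀ i j' ibar jbar' : Bool,
      ∑ k : KZ, ∑ kbar : KZ, Dab'Z Dj (i, j', k) (ibar, jbar', kbar)
        = ∑ I' : Bool, ∑ J : Bool, ∑ Ibar' : Bool, ∑ Jbar : Bool,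
            Dj (i, I', J, j') (ibar, Ibar', Jbar, jbar')) ∧
    (∀ i' j ibar' jbar : Bool,
      ∑ k : KZ, ∑ kbar : KZ, Da'bZ Dj (i', j, k) (ibar', jbar, kbar)
        = ∑ I : Bool, ∑ J' : Bool, ∑ Ibar : Bool, ∑ Jbar' : Bool,
            Dj (I, i', j, J') (Ibar, ibar', jbar, Jbar')) ∧
    (∀ i' j' ibar' jbar' : Bool,
      ∑ k : KZ, ∑ kbar : KZ, Da'b'Z Dj (i', j', k) (ibar', jbar', kbar)
        = ∑ I : Bool, ∑ J : Bool, ∑ Ibar : Bool, ∑ Jbar : Bool,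
            Dj (I, i', J, j') (Ibar, ibar', Jbar, jbar')) ∧
    -- (2) the Z-marginal reproduces D_joint
    (∀ k kbar : KZ, DZ Dj k kbar = Dj k kbar) ∧
    -- (3) quantum factorizability for the four models
    (∀ (i j ibar jbar : Bool) (k kbar : KZ),
      DabZ Dj (i, j, k) (ibar, jbar, kbar) * DZ Dj k kbar
        = DaZ Dj (i, k) (ibar, kbar) * DbZ Dj (j, k) (jbar, kbar)) ∧
    (∀ (i j' ibar jbar' : Bool) (k kbar : KZ),
      Dab'Z Dj (i, j', k) (ibar, jbar', kbar)
          * (∑ i₀, ∑ ibar₀, ∑ j₀, ∑ jbar₀, Dab'Z Dj (i₀, j₀, k) (ibar₀, jbar₀, kbar))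
        = (∑ j₀, ∑ jbar₀, Dab'Z Dj (i, j₀, k) (ibar, jbar₀, kbar))
          * (∑ i₀, ∑ ibar₀, Dab'Z Dj (i₀, j', k) (ibar₀, jbar', kbar))) ∧
    (∀ (i' j ibar' jbar : Bool) (k kbar : KZ),
      Da'bZ Dj (i', j, k) (ibar', jbar, kbar)
          * (∑ i₀, ∑ ibar₀, ∑ j₀, ∑ jbar₀, Da'bZ Dj (i₀, j₀, k) (ibar₀, jbar₀, kbar))
        = (∑ j₀, ∑ jbar₀, Da'bZ Dj (i', j₀, k) (ibar', jbar₀, kbar))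
          * (∑ i₀, ∑ ibar₀, Da'bZ Dj (i₀, j, k) (ibar₀, jbar, kbar))) ∧
    (∀ (i' j' ibar' jbar' : Bool) (k kbar : KZ),
      Da'b'Z Dj (i', j', k) (ibar', jbar', kbar)
          * (∑ i₀, ∑ ibar₀, ∑ j₀, ∑ jbar₀, Da'b'Z Dj (i₀, j₀, k) (ibar₀, jbar₀, kbar))
        = (∑ j₀, ∑ jbar₀, Da'b'Z Dj (i', j₀, k) (ibar', jbar₀, kbar))
          * (∑ i₀, ∑ ibar₀, Da'b'Z Dj (i₀, j', k) (ibar₀, jbar', kbar))) := by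
  refine ⟨?_, ?_, ?_, ?_, ?_, ?_, ?_, ?_, ?_⟩
  · intro i j ibar jbar
    simp only [Fintype.sum_prod_type, DabZ]
    cases i <;> cases j <;> cases ibar <;> cases jbar <;>
      simp [ind, Fintype.sum_bool, Finset.sum_comm]
  · intro i j' ibar jbar'
    simp only [Fintype.sum_prod_type, Dab'Z]
    cases i <;> cases j' <;> cases ibar <;> cases jbar' <;>
      simp [ind, Fintype.sum_bool, Finset.sum_comm]
  · intro i' j ibar' jbar
    simp only [Fintype.sum_prod_type, Da'bZ]
    cases i' <;> cases j <;> cases ibar' <;> cases jbar <;>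
      simp [ind, Fintype.sum_bool, Finset.sum_comm]
  · intro i' j' ibar' jbar'
    simp only [Fintype.sum_prod_type, Da'b'Z]
    cases i' <;> cases j' <;> cases ibar' <;> cases jbar' <;>
      simp [ind, Fintype.sum_bool, Finset.sum_comm]
  · rintro ⟨I, I', J, J'⟩ ⟨Ib, Ib', Jb, Jb'⟩
    simp only [DZ, DabZ, Fintype.sum_bool]
    cases I <;> cases Ib <;> cases J <;> cases Jb <;> simp [ind]
  · rintro i j ibar jbar ⟨I, I', J, J'⟩ ⟨Ib, Ib', Jb, Jb'⟩
    simp only [DZ, DaZ, DbZ, DabZ, Fintype.sum_bool]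
    ring
  · rintro i j' ibar jbar' ⟨I, I', J, J'⟩ ⟨Ib, Ib', Jb, Jb'⟩
    simp only [Dab'Z, Fintype.sum_bool]
    ring
  · rintro i' j ibar' jbar ⟨I, I', J, J'⟩ ⟨Ib, Ib', Jb, Jb'⟩
    simp only [Da'bZ, Fintype.sum_bool]
    ring
  · rintro i' j' ibar' jbar' ⟨I, I', J, J'⟩ ⟨Ib, Ib', Jb, Jb'⟩
    simp only [Da'b'Z, Fintype.sum_bool]
    ring
end
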